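/- arXiv:1910.05989 — 3 statements merged into one kernel-verified Lean document; each statement's English description precedes it below -/
import Mathlib

section
/- Let G be a finite group with exactly one conjugacy class of involutions, let x ∈ G be an involution, and let α = σ_x be the inner automorphism g ↦ xgx. Then the set G_{-α} = {g ∈ G | α(g) = g⁻¹} has cardinality |ω_α(G)| + 1, where ω_α(G) = {α(g)g⁻¹ | g ∈ G}. -/
/-!
Left multiplication by `x` carries `G_{-α}` onto the set of solutions of `t ^ 2 = 1`, because
`x g x = g⁻¹` says exactly that `(x g) ^ 2 = 1`; it also carries the conjugacy class of `x`
onto `ω_α(G)`, because `x g x g⁻¹ = x (g x g⁻¹)`. With a single class of involutions the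
solutions of `t ^ 2 = 1` are `1` together with the conjugacy class of `x`, which gives the
extra `1`.
-/

open scoped Pointwise

section InvolutionConjugation

variable {G : Type*} [Group G] {x : G}

theorem setOf_mul_mul_eq_inv_eq_smul (hx : x ^ 2 = 1) :
    {g : G | x * g * x = g⁻¹} = x • {t : G | t ^ 2 = 1} := by
  have hxinv : x⁻¹ = x := inv_eq_of_mul_eq_one_right (by rw [← sq, hx])
  ext g
  rw [Set.mem_smul_set_iff_inv_smul_mem, smul_eq_mul, hxinv, Set.mem_ofPred_eq,
    Set.mem_ofPred_eq, sq, ← mul_assoc, eq_inv_iff_mul_eq_one, mul_assoc]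

theorem setOf_exists_mul_conj_eq_smul_conjugatesOf :
    {y : G | ∃ g : G, y = x * g * x * g⁻¹} = x • conjugatesOf x := by
  ext y
  simp only [Set.mem_ofPred_eq, Set.mem_smul_set, conjugatesOf, isConj_iff, smul_eq_mul]
  constructor
  · rintro ⟨g, rfl⟩
    exact ⟨g * x * g⁻¹, ⟨g, rfl⟩, by group⟩
  · rintro ⟨_, ⟨g, rfl⟩, rfl⟩
    exact ⟨g, by group⟩

theorem setOf_sq_eq_one_eq_insert_conjugatesOf (hx : x ^ 2 = 1)
    (hconj : ∀ t : G, t ^ 2 = 1 → t ≠ 1 → IsConj x t) :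
    {t : G | t ^ 2 = 1} = insert 1 (conjugatesOf x) := by
  ext t
  simp only [Set.mem_ofPred_eq, Set.mem_insert_iff, conjugatesOf]
  constructor
  · intro ht
    by_cases ht1 : t = 1
    · exact Or.inl ht1
    · exact Or.inr (hconj t ht ht1)
  · rintro (rfl | hxt)
    · exact one_pow 2
    · obtain ⟨g, rfl⟩ := isConj_iff.mp hxt
      rw [conj_pow, hx, mul_one, mul_inv_cancel]

theorem one_notMem_conjugatesOf (hx1 : x ≠ 1) : (1 : G) ∉ conjugatesOf x :=
  fun h => hx1 (isConj_one_left.mp h)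

end InvolutionConjugation

theorem stmt0 {G : Type*} [Group G] [Finite G] (x : G) (hx2 : x ^ 2 = 1) (hx1 : x ≠ 1)
    (huniq : ∀ a b : G, a ^ 2 = 1 → a ≠ 1 → b ^ 2 = 1 → b ≠ 1 → IsConj a b) :
    {g : G | x * g * x = g⁻¹}.ncard = {y : G | ∃ g : G, y = x * g * x * g⁻¹}.ncard + 1 := by
  rw [setOf_mul_mul_eq_inv_eq_smul hx2, setOf_exists_mul_conj_eq_smul_conjugatesOf,
    Set.ncard_smul_set, Set.ncard_smul_set,
    setOf_sq_eq_one_eq_insert_conjugatesOf hx2 (huniq x · hx2 hx1),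
    Set.ncard_insert_of_notMem (one_notMem_conjugatesOf hx1) (Set.toFinite _)]
end

section
/- Let G be a finite group, x ∈ G an involution, α = σ_x, and S = {a, α(a⁻¹)} a generalized Cayley subset with a ∉ ω_α(G). Suppose n = order of xa in G is odd. Then the generalized Cayley graph GC(G, S, α), with vertex set G and edges {g, h} whenever α(g⁻¹)h ∈ S, is a disjoint union of |G|/(2n) cycles, each of length 2n; in particular every vertex g lies on the cycle g — xg(xa) — g(xa)² — xg(xa)³ — ⋯, which closes after 2n steps. -/
open SimpleGraph

private theorem aux16 {G : Type*} [Group G] [Fintype G] (x c : G) (hx2 : x * x = 1)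
    (hx1 : x ≠ 1) (n : ℕ) (hn : orderOf c = n) (hodd : Odd n) :
    Nonempty ((SimpleGraph.fromRel fun g h : G => h = x * g * c ∨ h = x * g * c⁻¹) ≃g
      (SimpleGraph.fromRel
        fun u v : Fin (Fintype.card G / (2 * n)) × ZMod (2 * n) => u.1 = v.1 ∧ u.2 = v.2 + 1)) := by
  classical
  have hn1 : 0 < n := hn ▸ orderOf_pos c
  set m := 2 * n with hm
  haveI : NeZero m := ⟨by omega⟩
  haveI : Fact (1 < m) := ⟨by omega⟩
  have hxinv : x⁻¹ = x := inv_eq_of_mul_eq_one_right hx2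
  have hx2z : x ^ (2 : ℤ) = 1 := by
    rw [show (2 : ℤ) = 1 + 1 by norm_num, zpow_add, zpow_one]; exact hx2
  have hxz : ∀ k : ℤ, (2 : ℤ) ∣ k → x ^ k = 1 := by
    rintro k ⟨t, rfl⟩
    rw [zpow_mul, hx2z, one_zpow]
  have hxo : ∀ k : ℤ, ¬ (2 : ℤ) ∣ k → x ^ k = x := by
    intro k hk
    have hk1 : k = 2 * ((k - 1) / 2) + 1 := by omega
    rw [hk1, zpow_add, hxz _ ⟨(k - 1) / 2, rfl⟩, one_mul, zpow_one]
  have hcn0 : c ^ n = 1 := by rw [← hn]; exact pow_orderOf_eq_one c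
  have hcn : ∀ k : ℤ, (c ^ k) ^ n = 1 := by
    intro k
    rw [← zpow_natCast (c ^ k), ← zpow_mul, mul_comm, zpow_mul, zpow_natCast, hcn0, one_zpow]
  -- x is not conjugate (by any g) to any power of c
  have hkey : ∀ (g : G) (k : ℤ), g * x * g⁻¹ ≠ c ^ k := by
    intro g k h
    obtain ⟨t, ht⟩ := hodd
    have hxn : x ^ n = x := by
      rw [ht, pow_add, pow_mul, pow_two, hx2, one_pow, one_mul, pow_one]
    have h1 : (g * x * g⁻¹) ^ n = g * x ^ n * g⁻¹ := conj_pow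
    rw [h, hcn, hxn] at h1
    have h2 := h1.symm
    rw [mul_inv_eq_one, mul_eq_left] at h2
    exact hx1 h2
  set p : G → ℤ → G := fun g k => x ^ k * g * c ^ k with hp
  have p_add : ∀ (g : G) (k l : ℤ), p g (k + l) = x ^ l * p g k * c ^ l := by
    intro g k l
    have hxc : x ^ k * x ^ l = x ^ l * x ^ k := by
      rw [← zpow_add, ← zpow_add, add_comm]
    simp only [hp]
    calc x ^ (k + l) * g * c ^ (k + l) = (x ^ k * x ^ l) * g * (c ^ k * c ^ l) := by
          rw [zpow_add, zpow_add]
      _ = (x ^ l * x ^ k) * g * (c ^ k * c ^ l) := by rw [hxc]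
      _ = x ^ l * (x ^ k * g * c ^ k) * c ^ l := by group
  have p_mod : ∀ (g : G) (k l : ℤ), (m : ℤ) ∣ (k - l) → p g k = p g l := by
    intro g k l hdvd
    have h2 : x ^ (k - l) = 1 := hxz _ (dvd_trans ⟨n, by push_cast [hm]; ring⟩ hdvd)
    have hc : c ^ (k - l) = 1 := by
      rw [← orderOf_dvd_iff_zpow_eq_one, hn]
      exact dvd_trans ⟨2, by push_cast [hm]; ring⟩ hdvd
    simp only [hp]
    rw [show k = (k - l) + l by ring, zpow_add, zpow_add, h2, hc]
    simp only [one_mul]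
  have p_inj : ∀ (g : G) (k l : ℤ), p g k = p g l → (m : ℤ) ∣ (k - l) := by
    intro g k l h
    simp only [hp] at h
    have e1 : x ^ (-l) * (x ^ k * g * c ^ k) * c ^ (-k) = x ^ (k - l) * g := by
      rw [show k - l = -l + k by ring, zpow_add]; group
    have e2 : x ^ (-l) * (x ^ l * g * c ^ l) * c ^ (-k) = g * c ^ (l - k) := by
      rw [show l - k = l + -k by ring, zpow_add]; group
    have hrel : x ^ (k - l) * g = g * c ^ (l - k) := by rw [← e1, ← e2, h]
    by_cases h2 : (2 : ℤ) ∣ (k - l)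
    · rw [hxz _ h2, one_mul] at hrel
      have hc1 : c ^ (l - k) = 1 := (left_eq_mul.mp hrel)
      have hndvd : (n : ℤ) ∣ (l - k) := by
        have := orderOf_dvd_iff_zpow_eq_one.mpr hc1
        rwa [hn] at this
      obtain ⟨s1, hs1⟩ := h2
      obtain ⟨t1, ht1⟩ := hndvd
      obtain ⟨u, hu⟩ : (2 : ℤ) ∣ t1 := by
        rcases Int.even_or_odd t1 with he | ho
        · exact he.two_dvd
        · exfalso
          have hoddn : Odd (n : ℤ) := (Int.odd_coe_nat n).mpr hodd
          have h3 : Odd (l - k) := by rw [ht1]; exact hoddn.mul ho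
          have h4 : Even (l - k) := ⟨-s1, by omega⟩
          exact ((Int.not_odd_iff_even.mpr h4)) h3
      exact ⟨-u, by push_cast [hm]; linear_combination -ht1 - (n : ℤ) * hu⟩
    · rw [hxo _ h2] at hrel
      have h3 : g⁻¹ * x * g⁻¹⁻¹ = c ^ (l - k) := by
        rw [inv_inv, mul_assoc, hrel, inv_mul_cancel_left]
      exact absurd h3 (hkey g⁻¹ (l - k))
  -- the setoid of connected components
  have prefl : ∀ g : G, ∃ k : ℤ, g = p g k := fun g => ⟨0, by simp [hp]⟩
  have psymm : ∀ {g h : G}, (∃ k : ℤ, h = p g k) → ∃ k : ℤ, g = p h k := by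
    rintro g h ⟨k, rfl⟩
    exact ⟨-k, by simp only [hp]; group⟩
  have ptrans : ∀ {g h i : G}, (∃ k : ℤ, h = p g k) → (∃ k : ℤ, i = p h k) →
      ∃ k : ℤ, i = p g k := by
    rintro g h i ⟨k, rfl⟩ ⟨l, rfl⟩
    exact ⟨k + l, by rw [p_add]⟩
  set s : Setoid G := ⟨fun g h => ∃ k : ℤ, h = p g k, prefl, psymm, ptrans⟩ with hs
  haveI : Fintype (Quotient s) := @Quotient.fintype G _ s (Classical.decRel _)
  -- ZMod valued parametrization
  set P : G → ZMod m → G := fun g k => p g (k.val : ℤ) with hP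
  have hval : ∀ k : ℤ, (m : ℤ) ∣ k - (((k : ZMod m)).val : ℤ) := by
    intro k
    rw [← ZMod.intCast_zmod_eq_zero_iff_dvd]
    push_cast
    rw [ZMod.natCast_val, ZMod.cast_id]
    ring
  have hvalN : ∀ k : ZMod m, (m : ℤ) ∣ (k.val : ℤ) - (((k.val : ℤ) : ZMod m)).val := by
    intro k
    have := hval (k.val : ℤ)
    exact this
  have Pinj : ∀ (g : G) (k l : ZMod m), P g k = P g l → k = l := by
    intro g k l h
    have hd : (m : ℤ) ∣ ((k.val : ℤ) - (l.val : ℤ)) := p_inj g _ _ h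
    have h0 : (((k.val : ℤ) - (l.val : ℤ) : ℤ) : ZMod m) = 0 :=
      (ZMod.intCast_zmod_eq_zero_iff_dvd _ m).mpr hd
    push_cast at h0
    rw [ZMod.natCast_val, ZMod.natCast_val, ZMod.cast_id, ZMod.cast_id] at h0
    exact sub_eq_zero.mp h0
  have Pcast : ∀ (g : G) (k : ℤ), p g k = P g ((k : ZMod m)) := by
    intro g k
    exact p_mod g k _ (hval k)
  have hP1 : ∀ (g : G) (k : ZMod m), P g (k + 1) = x * P g k * c := by
    intro g k
    have h1 : x * P g k * c = p g ((k.val : ℤ) + 1) := by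
      rw [p_add]; simp [zpow_one, hP]
    rw [h1, Pcast]
    congr 1
    push_cast
    rw [ZMod.natCast_val, ZMod.cast_id]
  have hP2 : ∀ (g : G) (k : ZMod m), P g (k - 1) = x * P g k * c⁻¹ := by
    intro g k
    have h1 : x * P g k * c⁻¹ = p g ((k.val : ℤ) + (-1)) := by
      rw [p_add]; simp [zpow_neg_one, hxinv, hP]
    rw [h1, Pcast]
    congr 1
    push_cast
    rw [ZMod.natCast_val, ZMod.cast_id]
    ring
  -- adjacency within a parametrized cycle
  set A := SimpleGraph.fromRel fun g h : G => h = x * g * c ∨ h = x * g * c⁻¹ with hA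
  have hone : (1 : ZMod m) ≠ 0 := one_ne_zero
  have adjP : ∀ (g : G) (k l : ZMod m), A.Adj (P g k) (P g l) ↔ (l = k + 1 ∨ k = l + 1) := by
    intro g k l
    rw [hA, SimpleGraph.fromRel_adj]
    constructor
    · rintro ⟨hne, (h | h) | (h | h)⟩
      · rw [← hP1 g k] at h; exact Or.inl (Pinj _ _ _ h)
      · rw [← hP2 g k] at h
        exact Or.inr (eq_sub_iff_add_eq.mp (Pinj _ _ _ h)).symm
      · rw [← hP1 g l] at h; exact Or.inr (Pinj _ _ _ h)
      · rw [← hP2 g l] at h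
        exact Or.inl (eq_sub_iff_add_eq.mp (Pinj _ _ _ h)).symm
    · rintro (rfl | rfl)
      · exact ⟨fun hEq => hone (left_eq_add.mp (Pinj g k (k + 1) hEq)),
          Or.inl (Or.inl (hP1 g k))⟩
      · refine ⟨fun hEq => ?_, Or.inl (Or.inr ?_)⟩
        · exact hone (left_eq_add.mp (Pinj g (l + 1) l hEq).symm)
        · have h5 := hP2 g (l + 1)
          rwa [add_sub_cancel_right] at h5
  -- adjacency implies same component
  have adjGlobal : ∀ g h : G, A.Adj g h → (∃ k : ℤ, h = p g k) := by
    intro g h hadj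
    rw [hA, SimpleGraph.fromRel_adj] at hadj
    have hxx : ∀ y : G, x * (x * y) = y := fun y => by rw [← mul_assoc, hx2, one_mul]
    rcases hadj.2 with (h1 | h1) | (h1 | h1)
    · exact ⟨1, by rw [h1]; simp [hp, zpow_one]⟩
    · exact ⟨-1, by rw [h1]; simp [hp, zpow_neg_one, hxinv]⟩
    · exact ⟨-1, by rw [h1]; simp [hp, zpow_neg_one, hxinv, hxx, mul_assoc]⟩
    · exact ⟨1, by rw [h1]; simp [hp, zpow_one, hxx, mul_assoc]⟩
  -- choose coordinates
  have hκex : ∀ g : G, ∃ k : ZMod m, g = P (Quotient.mk s g).out k := by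
    intro g
    obtain ⟨k, hk⟩ : ∃ k : ℤ, g = p (Quotient.mk s g).out k :=
      Quotient.exact (Quotient.out_eq (Quotient.mk s g))
    refine ⟨(k : ZMod m), ?_⟩
    conv_lhs => rw [hk]
    exact Pcast _ k
  set κ : G → ZMod m := fun g => Classical.choose (hκex g) with hκ
  have κspec : ∀ g : G, g = P (Quotient.mk s g).out (κ g) := fun g => Classical.choose_spec (hκex g)
  -- the bijection
  have houtP : ∀ (q : Quotient s) (k : ZMod m), Quotient.mk s (P q.out k) = q := by
    intro q k
    have h1 : Quotient.mk s q.out = Quotient.mk s (P q.out k) :=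
      Quotient.sound ⟨(k.val : ℤ), rfl⟩
    rw [← h1, Quotient.out_eq]
  have hκP : ∀ (q : Quotient s) (k : ZMod m), κ (P q.out k) = k := by
    intro q k
    apply Pinj q.out
    have h1 := κspec (P q.out k)
    rw [houtP q k] at h1
    exact h1.symm
  set E0 : G ≃ Quotient s × ZMod m :=
    { toFun := fun g => (Quotient.mk s g, κ g)
      invFun := fun qk => P qk.1.out qk.2
      left_inv := fun g => (κspec g).symm
      right_inv := fun qk => Prod.ext (houtP qk.1 qk.2) (hκP qk.1 qk.2) } with hE0
  -- adjacency characterization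
  have adjChar : ∀ g h : G, A.Adj g h ↔
      (Quotient.mk s g = Quotient.mk s h ∧ (κ h = κ g + 1 ∨ κ g = κ h + 1)) := by
    intro g h
    constructor
    · intro hadj
      have hq : Quotient.mk s g = Quotient.mk s h := Quotient.sound (adjGlobal g h hadj)
      refine ⟨hq, ?_⟩
      have hg := κspec g
      have hh := κspec h
      rw [hq] at hg
      obtain ⟨r0, hr0⟩ : ∃ r0, (Quotient.mk s h).out = r0 := ⟨_, rfl⟩
      rw [hr0] at hg hh
      rw [hg, hh] at hadj
      exact (adjP r0 _ _).mp hadj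
    · rintro ⟨hq, hk⟩
      have hg := κspec g
      have hh := κspec h
      rw [hq] at hg
      obtain ⟨r0, hr0⟩ : ∃ r0, (Quotient.mk s h).out = r0 := ⟨_, rfl⟩
      rw [hr0] at hg hh
      rw [hg, hh]
      exact (adjP r0 _ _).mpr hk
  -- cardinalities
  have cardG : Fintype.card G = Fintype.card (Quotient s) * m := by
    rw [Fintype.card_congr E0, Fintype.card_prod, ZMod.card]
  have cardQ : Fintype.card (Quotient s) = Fintype.card G / m := by
    rw [cardG, Nat.mul_div_cancel _ (by omega : 0 < m)]
  set F : Quotient s ≃ Fin (Fintype.card G / m) :=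
    (Fintype.equivFin (Quotient s)).trans (finCongr cardQ) with hF
  set E : G ≃ Fin (Fintype.card G / m) × ZMod m :=
    E0.trans (F.prodCongr (Equiv.refl (ZMod m))) with hE
  refine ⟨⟨E, ?_⟩⟩
  intro g h
  show (SimpleGraph.fromRel _).Adj (E g) (E h) ↔ A.Adj g h
  rw [SimpleGraph.fromRel_adj, adjChar]
  have hEg1 : (E g).1 = F (Quotient.mk s g) := rfl
  have hEg2 : (E g).2 = κ g := rfl
  have hEh1 : (E h).1 = F (Quotient.mk s h) := rfl
  have hEh2 : (E h).2 = κ h := rfl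
  rw [hEg1, hEg2, hEh1, hEh2]
  constructor
  · rintro ⟨hne, (⟨h1, h2⟩ | ⟨h1, h2⟩)⟩
    · exact ⟨F.injective h1, Or.inr h2⟩
    · exact ⟨(F.injective h1).symm, Or.inl h2⟩
  · rintro ⟨hq, hk⟩
    have hκne : κ g ≠ κ h := by
      rcases hk with h1 | h1
      · intro hEq; rw [hEq] at h1; exact hone (left_eq_add.mp h1)
      · intro hEq; rw [hEq] at h1; exact hone (left_eq_add.mp h1)
    refine ⟨?_, ?_⟩
    · intro hEq
      have : (E g).2 = (E h).2 := by rw [hEq]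
      exact hκne this
    · rcases hk with h1 | h1
      · exact Or.inr ⟨congrArg F hq.symm, h1⟩
      · exact Or.inl ⟨congrArg F hq, h1⟩

theorem stmt16 {G : Type*} [Group G] [Fintype G] (x a : G) (hx : x ^ 2 = 1) (hx1 : x ≠ 1)
    (S : Set G) (hS : S = {a, x * a⁻¹ * x})
    (hloop : ∀ g : G, x * g * x * g⁻¹ ∉ S)
    (n : ℕ) (hn : n = orderOf (x * a)) (hodd : Odd n)
    (hconj : ¬ IsConj (x * a) x) :
    Nonempty ((SimpleGraph.fromRel fun g h : G => x * g⁻¹ * x * h ∈ S) ≃g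
      (SimpleGraph.fromRel
        fun u v : Fin (Fintype.card G / (2 * n)) × ZMod (2 * n) => u.1 = v.1 ∧ u.2 = v.2 + 1)) := by
  have hx2 : x * x = 1 := by rw [← pow_two]; exact hx
  have hxinv : x⁻¹ = x := inv_eq_of_mul_eq_one_right hx2
  have hxx : ∀ y : G, x * (x * y) = y := fun y => by rw [← mul_assoc, hx2, one_mul]
  have hiff : ∀ g h : G, (x * g⁻¹ * x * h ∈ S) ↔
      (h = x * g * (x * a) ∨ h = x * g * (x * a)⁻¹) := by
    intro g h
    rw [hS, Set.mem_insert_iff, Set.mem_singleton_iff]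
    constructor
    · rintro (h1 | h1)
      · left
        have h2 : h = (x * g⁻¹ * x)⁻¹ * a := eq_inv_mul_of_mul_eq h1
        rw [h2]
        simp [mul_inv_rev, hxinv, mul_assoc]
      · right
        have h2 : h = (x * g⁻¹ * x)⁻¹ * (x * a⁻¹ * x) := eq_inv_mul_of_mul_eq h1
        rw [h2]
        simp [mul_inv_rev, hxinv, mul_assoc, hxx]
    · rintro (h1 | h1)
      · left
        rw [h1]
        simp [mul_assoc, hxx, inv_mul_cancel_left]
      · right
        rw [h1]
        simp [mul_inv_rev, hxinv, mul_assoc, hxx, inv_mul_cancel_left]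
  have hEq : (SimpleGraph.fromRel fun g h : G => x * g⁻¹ * x * h ∈ S) =
      (SimpleGraph.fromRel fun g h : G => h = x * g * (x * a) ∨ h = x * g * (x * a)⁻¹) := by
    ext g h
    rw [SimpleGraph.fromRel_adj, SimpleGraph.fromRel_adj, hiff g h, hiff h g]
  rw [hEq]
  exact aux16 x (x * a) hx2 hx1 n hn.symm hodd
end

section
/- Let G be a finite group, x an involution, α = σ_x, and S_i = {a_i, α(a_i⁻¹)} for i = 1,2 generalized Cayley subsets with x·a₁ of odd order m₁ and x·a₂ of odd order m₂, m₁ ≠ m₂. Then GC(G, S₁, α) and GC(G, S₂, α) are not isomorphic as graphs. -/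
/-!
With `α` the conjugation by `x`, the neighbours of `g` in `GC(G, {a, α(a⁻¹)}, α)` are `α(g) a`
and its preimage, so the graph is the functional graph of the permutation `σ g = α(g) a` and its
connected components are the `σ`-orbits. Since `σⁿ g = xⁿ g (x a)ⁿ`, a fixed point of `σⁿ` makes
`(x a)ⁿ` conjugate to `x⁻ⁿ`; that element is killed both by `2` and by the odd order of `x a`, so
it is trivial. Hence every orbit has exactly `ord(x) · ord(x a)` points, and a graph isomorphism,
which preserves component sizes, forces `ord(x a₁) = ord(x a₂)`.
-/

open Function SimpleGraph

theorem eq_one_of_sq_eq_one_of_pow_eq_one {M : Type*} [Monoid M] {y : M} {m : ℕ}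
    (h2 : y ^ 2 = 1) (hm : y ^ m = 1) (hodd : Odd m) : y = 1 := by
  have := pow_gcd_eq_one.2 ⟨h2, hm⟩
  rwa [Nat.coprime_two_left.2 hodd, pow_one] at this

namespace Equiv.Perm

variable {V : Type*}

def functionalGraph (σ : Perm V) : SimpleGraph V := SimpleGraph.fromRel fun u v => σ u = v

variable {σ : Perm V}

theorem functionalGraph_reachable_apply (v : V) : σ.functionalGraph.Reachable v (σ v) := by
  by_cases h : v = σ v
  · rw [← h]
  · exact Adj.reachable ((fromRel_adj _ _ _).2 ⟨h, Or.inl rfl⟩)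

theorem functionalGraph_reachable_iff {u v : V} :
    σ.functionalGraph.Reachable u v ↔ σ.SameCycle u v := by
  constructor
  · rintro ⟨p⟩
    induction p with
    | nil => exact SameCycle.refl _ _
    | cons hadj _ ih =>
      obtain ⟨-, rfl | rfl⟩ := (fromRel_adj _ _ _).1 hadj
      · exact sameCycle_apply_left.1 ih
      · exact sameCycle_apply_left.2 ih
  · rintro ⟨i, rfl⟩
    induction i using Int.induction_on with
    | zero => rfl
    | succ i ih =>
      refine ih.trans ?_
      rw [add_comm, zpow_one_add, mul_apply]
      exact functionalGraph_reachable_apply _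
    | pred i ih =>
      refine ih.trans (Reachable.symm ?_)
      have := functionalGraph_reachable_apply (σ := σ) ((σ ^ (-(i : ℤ) - 1)) u)
      rwa [← mul_apply, ← zpow_one_add, add_sub_cancel] at this

theorem sameCycle_iff_mem_orbit_zpowers {u v : V} :
    σ.SameCycle u v ↔ v ∈ MulAction.orbit (Subgroup.zpowers σ) u := by
  rw [MulAction.mem_orbit_iff]
  constructor
  · rintro ⟨k, rfl⟩
    exact ⟨⟨σ ^ k, k, rfl⟩, rfl⟩
  · rintro ⟨⟨_, k, rfl⟩, rfl⟩
    exact ⟨k, rfl⟩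

theorem natCard_supp_functionalGraph (v : V) :
    Nat.card (σ.functionalGraph.connectedComponentMk v).supp = minimalPeriod σ v := by
  have hsupp : (σ.functionalGraph.connectedComponentMk v).supp =
      MulAction.orbit (Subgroup.zpowers σ) v := by
    ext w
    rw [ConnectedComponent.mem_supp_iff, ConnectedComponent.eq, reachable_comm,
      functionalGraph_reachable_iff, sameCycle_iff_mem_orbit_zpowers]
  rw [hsupp, Nat.card_congr (MulAction.orbitZPowersEquiv σ v), Nat.card_zmod]
  rfl

end Equiv.Perm

namespace GeneralizedCayley

variable {G : Type*} [Group G] {x a : G}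

/-- `GC(G, S, α)` for `α` the conjugation `h ↦ x h x` by an involution `x`. -/
def graph (x : G) (S : Set G) : SimpleGraph G :=
  SimpleGraph.fromRel fun g h => x * g⁻¹ * x * h ∈ S

def edgePerm (x a : G) : Equiv.Perm G where
  toFun g := x * g * x * a
  invFun g := x⁻¹ * (g * a⁻¹) * x⁻¹
  left_inv g := by group
  right_inv g := by group

theorem edgePerm_pow_apply (n : ℕ) (g : G) :
    (edgePerm x a ^ n) g = x ^ n * g * (x * a) ^ n := by
  induction n with
  | zero => simp
  | succ n ih =>
    rw [pow_succ', Equiv.Perm.mul_apply, ih, pow_succ' x, pow_succ (x * a)]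
    simp only [edgePerm, Equiv.coe_fn_mk, mul_assoc]

theorem edgePerm_pow_apply_eq_self_iff (hx : x ^ 2 = 1) (hodd : Odd (orderOf (x * a)))
    (n : ℕ) (g : G) : (edgePerm x a ^ n) g = g ↔ x ^ n = 1 ∧ (x * a) ^ n = 1 := by
  rw [edgePerm_pow_apply]
  refine ⟨fun h => ?_, fun ⟨h₁, h₂⟩ => by rw [h₁, h₂, one_mul, mul_one]⟩
  have hconj : (x * a) ^ n = MulAut.conj g⁻¹ (x ^ n)⁻¹ := by
    calc (x * a) ^ n = g⁻¹ * (x ^ n)⁻¹ * (x ^ n * g * (x * a) ^ n) := by group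
      _ = MulAut.conj g⁻¹ (x ^ n)⁻¹ := by rw [h, MulAut.conj_apply, inv_inv]
  have hxa : (x * a) ^ n = 1 := by
    refine eq_one_of_sq_eq_one_of_pow_eq_one ?_ ?_ hodd
    · rw [hconj, ← map_pow, inv_pow, ← pow_mul, mul_comm n 2, pow_mul, hx, one_pow, inv_one,
        map_one]
    · rw [← pow_mul, mul_comm, pow_mul, pow_orderOf_eq_one, one_pow]
  rw [hxa, eq_comm, map_eq_one_iff _ (MulAut.conj g⁻¹).injective, inv_eq_one] at hconj
  exact ⟨hconj, hxa⟩

theorem minimalPeriod_edgePerm (hx : x ^ 2 = 1) (hodd : Odd (orderOf (x * a))) (g : G) :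
    minimalPeriod (edgePerm x a) g = orderOf x * orderOf (x * a) := by
  have hcop : (orderOf x).Coprime (orderOf (x * a)) :=
    Nat.Coprime.coprime_dvd_left (orderOf_dvd_of_pow_eq_one hx) (Nat.coprime_two_left.2 hodd)
  apply Nat.dvd_antisymm
  · apply IsPeriodicPt.minimalPeriod_dvd
    refine (edgePerm_pow_apply_eq_self_iff hx hodd _ g).2 ⟨?_, ?_⟩ <;>
      rw [← orderOf_dvd_iff_pow_eq_one]
    exacts [dvd_mul_right _ _, dvd_mul_left _ _]
  · obtain ⟨h₁, h₂⟩ :=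
      (edgePerm_pow_apply_eq_self_iff hx hodd _ g).1 (isPeriodicPt_minimalPeriod _ g)
    exact hcop.mul_dvd_of_dvd_of_dvd (orderOf_dvd_of_pow_eq_one h₁) (orderOf_dvd_of_pow_eq_one h₂)

theorem graph_eq_functionalGraph (hx : x ^ 2 = 1) :
    graph x {a, x * a⁻¹ * x} = (edgePerm x a).functionalGraph := by
  have hxx : x * x = 1 := by rw [← sq, hx]
  have hxx' (t : G) : x * (x * t) = t := by rw [← mul_assoc, hxx, one_mul]
  have hxinv : x⁻¹ = x := inv_eq_of_mul_eq_one_right hxx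
  have hfwd (g h : G) : x * g⁻¹ * x * h = a ↔ edgePerm x a g = h := by
    constructor <;> rintro rfl <;> simp [edgePerm, mul_assoc, hxx']
  have hbwd (g h : G) : x * g⁻¹ * x * h = x * a⁻¹ * x ↔ edgePerm x a h = g := by
    rw [← hfwd]
    constructor
    · intro e
      have ha : a⁻¹ = x * (x * g⁻¹ * x * h) * x := by rw [e]; simp [mul_assoc, hxx, hxx']
      rw [← inv_inv a, ha]
      simp [mul_assoc, hxinv, hxx']
    · rintro rfl
      simp [mul_assoc, hxinv, hxx]
  ext g h
  simp only [graph, Equiv.Perm.functionalGraph, fromRel_adj, Set.mem_insert_iff,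
    Set.mem_singleton_iff, hfwd, hbwd]
  tauto

theorem natCard_supp (hx : x ^ 2 = 1) (hodd : Odd (orderOf (x * a)))
    (C : (graph x {a, x * a⁻¹ * x}).ConnectedComponent) :
    Nat.card C.supp = orderOf x * orderOf (x * a) := by
  revert C
  rw [graph_eq_functionalGraph hx]
  refine ConnectedComponent.ind fun g => ?_
  rw [Equiv.Perm.natCard_supp_functionalGraph, minimalPeriod_edgePerm hx hodd]

end GeneralizedCayley

theorem stmt18_general {G : Type*} [Group G] (x a₁ a₂ : G) (hx : x ^ 2 = 1)
    (S₁ S₂ : Set G) (hS₁ : S₁ = {a₁, x * a₁⁻¹ * x}) (hS₂ : S₂ = {a₂, x * a₂⁻¹ * x})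
    (m₁ m₂ : ℕ) (hm₁ : m₁ = orderOf (x * a₁)) (hm₂ : m₂ = orderOf (x * a₂))
    (hodd₁ : Odd m₁) (hodd₂ : Odd m₂) (hne : m₁ ≠ m₂) :
    IsEmpty ((SimpleGraph.fromRel fun g h : G => x * g⁻¹ * x * h ∈ S₁) ≃g
      (SimpleGraph.fromRel fun g h : G => x * g⁻¹ * x * h ∈ S₂)) := by
  subst hS₁ hS₂ hm₁ hm₂
  refine ⟨fun φ => hne ?_⟩
  have hcard := Nat.card_congr <| ConnectedComponent.isoEquivSupp
    (G := GeneralizedCayley.graph x {a₁, x * a₁⁻¹ * x})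
    (G' := GeneralizedCayley.graph x {a₂, x * a₂⁻¹ * x}) φ (connectedComponentMk _ 1)
  rw [GeneralizedCayley.natCard_supp hx hodd₁, GeneralizedCayley.natCard_supp hx hodd₂] at hcard
  exact Nat.eq_of_mul_eq_mul_left
    (Nat.pos_of_dvd_of_pos (orderOf_dvd_of_pow_eq_one hx) two_pos) hcard

theorem stmt18 {G : Type*} [Group G] [Fintype G] (x a₁ a₂ : G) (hx : x ^ 2 = 1) (hx1 : x ≠ 1)
    (S₁ S₂ : Set G) (hS₁ : S₁ = {a₁, x * a₁⁻¹ * x}) (hS₂ : S₂ = {a₂, x * a₂⁻¹ * x})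
    (hloop₁ : ∀ g : G, x * g * x * g⁻¹ ∉ S₁) (hloop₂ : ∀ g : G, x * g * x * g⁻¹ ∉ S₂)
    (m₁ m₂ : ℕ) (hm₁ : m₁ = orderOf (x * a₁)) (hm₂ : m₂ = orderOf (x * a₂))
    (hodd₁ : Odd m₁) (hodd₂ : Odd m₂) (hne : m₁ ≠ m₂) :
    IsEmpty ((SimpleGraph.fromRel fun g h : G => x * g⁻¹ * x * h ∈ S₁) ≃g
      (SimpleGraph.fromRel fun g h : G => x * g⁻¹ * x * h ∈ S₂)) :=
  stmt18_general x a₁ a₂ hx S₁ S₂ hS₁ hS₂ m₁ m₂ hm₁ hm₂ hodd₁ hodd₂ hne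
end
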